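/- arXiv:math/0402229 — 2 statements merged into one kernel-verified Lean document; each statement's English description precedes it below -/
import Mathlib

section
/- Fix a strictly positive tensor P ∈ ℝ^{m×k×n}. Define Q*₋(i,l) = Σ_j P(i,l,j), Q*₊(l,j) = Σ_i P(i,l,j) / Σ_{i,j} P(i,l,j), and Q*(i,l,j) = Q*₋(i,l) Q*₊(l,j). Then for every Q ∈ 𝒬 (i.e., Q(i,l,j) = Q₋(i,l)Q₊(l,j) with Q₋, Q₊ nonnegative and Q₊ row stochastic), the Pythagorean identity D(P||Q) = D(P||Q*) + D(Q*||Q) holds. -/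
open scoped ENNReal BigOperators

/-- Termwise I-divergence with the conventions `0/0 = 0`, `0·log 0 = 0`
and `p/0 = ∞` for `p > 0`. -/
noncomputable def iDivTerm (a b : ℝ) : ℝ≥0∞ :=
  if a = 0 then ENNReal.ofReal b
  else if b = 0 then ⊤
  else ENNReal.ofReal (a * Real.log (a / b) - a + b)

/-- I-divergence between tensors. -/
noncomputable def DT {m k n : ℕ} (A B : Fin m → Fin k → Fin n → ℝ) : ℝ≥0∞ :=
  ∑ i, ∑ l, ∑ j, iDivTerm (A i l j) (B i l j)

lemma iDivTerm_pos_pos {a b : ℝ} (ha : a ≠ 0) (hb : b ≠ 0) :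
    iDivTerm a b = ENNReal.ofReal (a * Real.log (a / b) - a + b) := by
  simp [iDivTerm, ha, hb]

lemma term_nonneg {a b : ℝ} (ha : 0 < a) (hb : 0 < b) :
    0 ≤ a * Real.log (a / b) - a + b := by
  have h : Real.log (b / a) ≤ b / a - 1 := Real.log_le_sub_one_of_pos (by positivity)
  have h2 : Real.log (b / a) = - Real.log (a / b) := by
    rw [← Real.log_inv, inv_div]
  rw [h2] at h
  have h3 : a * (1 - b / a) ≤ a * Real.log (a / b) := by
    apply mul_le_mul_of_nonneg_left _ ha.le
    linarith
  have : a * (1 - b / a) = a - b := by field_simp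
  linarith [h3, this]

lemma DT_eq_top {m k n : ℕ} {A B : Fin m → Fin k → Fin n → ℝ}
    (i : Fin m) (l : Fin k) (j : Fin n) (hA : A i l j ≠ 0) (hB : B i l j = 0) :
    DT A B = ⊤ := by
  unfold DT
  rw [ENNReal.sum_eq_top]
  refine ⟨i, Finset.mem_univ _, ?_⟩
  rw [ENNReal.sum_eq_top]
  refine ⟨l, Finset.mem_univ _, ?_⟩
  rw [ENNReal.sum_eq_top]
  refine ⟨j, Finset.mem_univ _, ?_⟩
  simp [iDivTerm, hA, hB]

lemma DT_pos {m k n : ℕ} {A B : Fin m → Fin k → Fin n → ℝ}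
    (hA : ∀ i l j, 0 < A i l j) (hB : ∀ i l j, 0 < B i l j) :
    DT A B = ENNReal.ofReal (∑ i, ∑ l, ∑ j,
      (A i l j * Real.log (A i l j / B i l j) - A i l j + B i l j)) := by
  unfold DT
  rw [ENNReal.ofReal_sum_of_nonneg (fun i _ => Finset.sum_nonneg fun l _ =>
      Finset.sum_nonneg fun j _ => term_nonneg (hA i l j) (hB i l j))]
  refine Finset.sum_congr rfl fun i _ => ?_
  rw [ENNReal.ofReal_sum_of_nonneg (fun l _ =>
      Finset.sum_nonneg fun j _ => term_nonneg (hA i l j) (hB i l j))]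
  refine Finset.sum_congr rfl fun l _ => ?_
  rw [ENNReal.ofReal_sum_of_nonneg (fun j _ => term_nonneg (hA i l j) (hB i l j))]
  exact Finset.sum_congr rfl fun j _ =>
    iDivTerm_pos_pos (hA i l j).ne' (hB i l j).ne'

theorem pythagoras_Q {m k n : ℕ}
    (P : Fin m → Fin k → Fin n → ℝ) (hP : ∀ i l j, 0 < P i l j)
    (Qm : Matrix (Fin m) (Fin k) ℝ) (Qp : Matrix (Fin k) (Fin n) ℝ)
    (hQm : ∀ i l, 0 ≤ Qm i l) (hQp : ∀ l j, 0 ≤ Qp l j)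
    (hrow : ∀ l, ∑ j, Qp l j = 1) :
    DT P (fun i l j => Qm i l * Qp l j) =
      DT P (fun i l j =>
        (∑ j', P i l j') * ((∑ i', P i' l j) / (∑ i', ∑ j', P i' l j'))) +
      DT (fun i l j =>
        (∑ j', P i l j') * ((∑ i', P i' l j) / (∑ i', ∑ j', P i' l j')))
        (fun i l j => Qm i l * Qp l j) := by
  -- degenerate dimensions
  rcases Nat.eq_zero_or_pos n with hn | hn
  · subst hn; simp [DT]
  rcases Nat.eq_zero_or_pos m with hm | hm
  · subst hm; simp [DT]
  haveI : Nonempty (Fin n) := Fin.pos_iff_nonempty.mp hn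
  haveI : Nonempty (Fin m) := Fin.pos_iff_nonempty.mp hm
  set S : Fin m → Fin k → ℝ := fun i l => ∑ j', P i l j' with hSdef
  set C : Fin k → Fin n → ℝ := fun l j => ∑ i', P i' l j with hCdef
  set T : Fin k → ℝ := fun l => ∑ i', ∑ j', P i' l j' with hTdef
  set Qs : Fin m → Fin k → Fin n → ℝ := fun i l j => S i l * (C l j / T l) with hQsdef
  have hS : ∀ i l, 0 < S i l := fun i l =>
    Finset.sum_pos (fun j _ => hP i l j) Finset.univ_nonempty
  have hC : ∀ l j, 0 < C l j := fun l j =>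
    Finset.sum_pos (fun i _ => hP i l j) Finset.univ_nonempty
  have hT : ∀ l, 0 < T l := fun l =>
    Finset.sum_pos (fun i _ => hS i l) Finset.univ_nonempty
  have hQs : ∀ i l j, 0 < Qs i l j := fun i l j => by
    have := hS i l; have := hC l j; have := hT l; positivity
  -- sum facts
  have hCT : ∀ l, ∑ j, C l j = T l := fun l => by
    rw [hCdef, hTdef]; exact Finset.sum_comm
  have hST : ∀ l, ∑ i, S i l = T l := fun l => rfl
  have margA : ∀ i l, ∑ j, Qs i l j = S i l := fun i l => by
    rw [hQsdef]
    simp only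
    rw [← Finset.mul_sum, ← Finset.sum_div, hCT, div_self (hT l).ne', mul_one]
  have margB : ∀ l j, ∑ i, Qs i l j = C l j := fun l j => by
    rw [hQsdef]
    simp only
    rw [← Finset.sum_mul, hST, mul_div_assoc', mul_comm, mul_div_assoc,
      div_self (hT l).ne', mul_one]
  by_cases hQ : ∀ i l j, 0 < Qm i l * Qp l j
  · -- positive case
    have hQm' : ∀ i l, 0 < Qm i l := fun i l => by
      obtain ⟨j⟩ := (inferInstance : Nonempty (Fin n))
      rcases mul_pos_iff.mp (hQ i l j) with ⟨h1, _⟩ | ⟨h1, _⟩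
      · exact h1
      · exact absurd h1 (not_lt.mpr (hQm i l))
    have hQp' : ∀ l j, 0 < Qp l j := fun l j => by
      obtain ⟨i⟩ := (inferInstance : Nonempty (Fin m))
      rcases mul_pos_iff.mp (hQ i l j) with ⟨_, h2⟩ | ⟨_, h2⟩
      · exact h2
      · exact absurd h2 (not_lt.mpr (hQp l j))
    rw [DT_pos hP hQ, DT_pos hP hQs, DT_pos hQs hQ,
      ← ENNReal.ofReal_add
        (Finset.sum_nonneg fun i _ => Finset.sum_nonneg fun l _ =>
          Finset.sum_nonneg fun j _ => term_nonneg (hP i l j) (hQs i l j))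
        (Finset.sum_nonneg fun i _ => Finset.sum_nonneg fun l _ =>
          Finset.sum_nonneg fun j _ => term_nonneg (hQs i l j) (hQ i l j))]
    congr 1
    -- the real identity
    have key : ∀ i l j,
        P i l j * Real.log (P i l j / (Qm i l * Qp l j)) - P i l j + Qm i l * Qp l j
        = (P i l j * Real.log (P i l j / Qs i l j) - P i l j + Qs i l j)
          + (Qs i l j * Real.log (Qs i l j / (Qm i l * Qp l j)) - Qs i l j
              + Qm i l * Qp l j)
          + (P i l j - Qs i l j) *
            ((Real.log (S i l) - Real.log (Qm i l))
              + (Real.log (C l j) - Real.log (T l) - Real.log (Qp l j))) := by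
      intro i l j
      have e1 : Real.log (P i l j / (Qm i l * Qp l j))
          = Real.log (P i l j) - Real.log (Qm i l) - Real.log (Qp l j) := by
        rw [Real.log_div (hP i l j).ne' (mul_pos (hQm' i l) (hQp' l j)).ne',
          Real.log_mul (hQm' i l).ne' (hQp' l j).ne']; ring
      have e2 : Real.log (Qs i l j)
          = Real.log (S i l) + Real.log (C l j) - Real.log (T l) := by
        rw [hQsdef]
        simp only
        rw [Real.log_mul (hS i l).ne' (div_pos (hC l j) (hT l)).ne',
          Real.log_div (hC l j).ne' (hT l).ne']; ring
      have e3 : Real.log (P i l j / Qs i l j)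
          = Real.log (P i l j) - Real.log (Qs i l j) :=
        Real.log_div (hP i l j).ne' (hQs i l j).ne'
      have e4 : Real.log (Qs i l j / (Qm i l * Qp l j))
          = Real.log (Qs i l j) - Real.log (Qm i l) - Real.log (Qp l j) := by
        rw [Real.log_div (hQs i l j).ne' (mul_pos (hQm' i l) (hQp' l j)).ne',
          Real.log_mul (hQm' i l).ne' (hQp' l j).ne']; ring
      rw [e1, e3, e4, e2]; ring
    simp_rw [key, Finset.sum_add_distrib]
    have hz : ∑ i, ∑ l, ∑ j, (P i l j - Qs i l j) *
        ((Real.log (S i l) - Real.log (Qm i l))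
          + (Real.log (C l j) - Real.log (T l) - Real.log (Qp l j))) = 0 := by
      simp_rw [mul_add, Finset.sum_add_distrib]
      have p1 : ∀ i l, ∑ j, (P i l j - Qs i l j) *
          (Real.log (S i l) - Real.log (Qm i l)) = 0 := fun i l => by
        rw [← Finset.sum_mul, Finset.sum_sub_distrib, margA i l]
        simp [hSdef]
      have p2 : ∑ i, ∑ l, ∑ j, (P i l j - Qs i l j) *
          (Real.log (C l j) - Real.log (T l) - Real.log (Qp l j)) = 0 := by
        rw [Finset.sum_comm]
        refine Finset.sum_eq_zero fun l _ => ?_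
        rw [Finset.sum_comm]
        refine Finset.sum_eq_zero fun j _ => ?_
        rw [← Finset.sum_mul, Finset.sum_sub_distrib, margB l j]
        simp [hCdef]
      simp_rw [p1]; simpa using p2
    rw [hz, add_zero]
  · -- some Q entry is zero
    push_neg at hQ
    obtain ⟨i, l, j, hle⟩ := hQ
    have hzero : Qm i l * Qp l j = 0 :=
      le_antisymm hle (mul_nonneg (hQm i l) (hQp l j))
    rw [DT_eq_top i l j (hP i l j).ne' hzero,
      DT_eq_top i l j (hQs i l j).ne' hzero]
    simp
end

section
/- Let P ∈ ℝ_+^{m×n} be strictly positive. Then min over Q ∈ 𝒬̄ of D(P||Q) equals the min over pairs (T,S) ∈ 𝒫 × 𝒬 of D(T||S), where 𝒬̄ is the set of m×n matrices Q with Q(i,j) = Σ_l S(i,l,j) for some S ∈ 𝒬. -/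
open scoped ENNReal BigOperators

noncomputable def DM {m n : ℕ} (A B : Matrix (Fin m) (Fin n) ℝ) : ℝ≥0∞ :=
  ∑ i, ∑ j, iDivTerm (A i j) (B i j)

def memQ {m k n : ℕ} (T : Fin m → Fin k → Fin n → ℝ) : Prop :=
  ∃ (Qm : Matrix (Fin m) (Fin k) ℝ) (Qp : Matrix (Fin k) (Fin n) ℝ),
    (∀ i l, 0 ≤ Qm i l) ∧ (∀ l j, 0 ≤ Qp l j) ∧
    (∀ l, ∑ j, Qp l j = 1) ∧ (∀ i l j, T i l j = Qm i l * Qp l j)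

def memP {m k n : ℕ} (P : Matrix (Fin m) (Fin n) ℝ)
    (T : Fin m → Fin k → Fin n → ℝ) : Prop :=
  (∀ i l j, 0 ≤ T i l j) ∧ (∀ i j, ∑ l, T i l j = P i j)

/-!
Writing the I-divergence term of `a` against `b > 0` as `b * klFun (a / b)`, Jensen's inequality for
the convex function `klFun` with weights `b l` gives the log-sum inequality: merging the middle index
of a pair `(T, S)` into `(P, ∑ₗ S)` never increases the divergence. Conversely, for every `S ∈ 𝒬`
whose marginal `∑ₗ S` is positive, splitting `P` proportionally to `S` gives a `T ∈ 𝒫` for which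
the log-sum inequality is an equality; if some marginal entry vanishes, `D(P ‖ ∑ₗ S) = ∞`.
-/

open Finset InformationTheory

lemma iDivTerm_eq_ofReal_mul_klFun {a b : ℝ} (h : a ≠ 0 → b ≠ 0) :
    iDivTerm a b = ENNReal.ofReal (b * klFun (a / b)) := by
  unfold iDivTerm
  by_cases ha : a = 0
  · simp [ha, klFun_zero]
  · rw [if_neg ha, if_neg (h ha), klFun_apply]
    congr 1
    have hb : b * (a / b) = a := mul_div_cancel₀ a (h ha)
    linear_combination (1 - Real.log (a / b)) * hb

section LogSum

variable {ι : Type*} {s : Finset ι} {a b : ι → ℝ}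

theorem mul_klFun_sum_div_sum_le (ha : ∀ l ∈ s, 0 ≤ a l) (hb : ∀ l ∈ s, 0 ≤ b l)
    (hab : ∀ l ∈ s, a l ≠ 0 → b l ≠ 0) (hB : 0 < ∑ l ∈ s, b l) :
    (∑ l ∈ s, b l) * klFun ((∑ l ∈ s, a l) / ∑ l ∈ s, b l) ≤
      ∑ l ∈ s, b l * klFun (a l / b l) := by
  have hmass : s.centerMass b (fun l => a l / b l) = (∑ l ∈ s, a l) / ∑ l ∈ s, b l := by
    rw [centerMass, smul_eq_mul, inv_mul_eq_div]
    congr 1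
    refine sum_congr rfl fun l hl => ?_
    by_cases hbl : b l = 0
    · simp [hbl, not_imp_not.mp (hab l hl) hbl]
    · rw [smul_eq_mul]
      field_simp
  have hJensen := convexOn_klFun.map_centerMass_le hb hB
    fun l hl => Set.mem_Ici.mpr (div_nonneg (ha l hl) (hb l hl))
  rw [hmass, centerMass, smul_eq_mul, le_inv_mul_iff₀ hB] at hJensen
  simpa only [Function.comp_apply, smul_eq_mul] using hJensen

theorem iDivTerm_sum_le_sum (ha : ∀ l ∈ s, 0 ≤ a l) (hb : ∀ l ∈ s, 0 ≤ b l) :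
    iDivTerm (∑ l ∈ s, a l) (∑ l ∈ s, b l) ≤ ∑ l ∈ s, iDivTerm (a l) (b l) := by
  by_cases hinf : ∃ l ∈ s, a l ≠ 0 ∧ b l = 0
  · obtain ⟨l, hl, hal, hbl⟩ := hinf
    rw [ENNReal.sum_eq_top.2 ⟨l, hl, by simp [iDivTerm, hal, hbl]⟩]
    exact le_top
  push Not at hinf
  rcases (sum_nonneg hb).eq_or_lt with hB | hB
  · have hb0 := (sum_eq_zero_iff_of_nonneg hb).1 hB.symm
    have ha0 : ∀ l ∈ s, a l = 0 := fun l hl => not_imp_not.1 (hinf l hl) (hb0 l hl)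
    rw [sum_eq_zero ha0, ← hB]
    simp [iDivTerm]
  · rw [iDivTerm_eq_ofReal_mul_klFun fun _ => hB.ne',
      sum_congr rfl fun l hl => iDivTerm_eq_ofReal_mul_klFun (hinf l hl),
      ← ENNReal.ofReal_sum_of_nonneg fun l hl =>
        mul_nonneg (hb l hl) (klFun_nonneg (div_nonneg (ha l hl) (hb l hl)))]
    exact ENNReal.ofReal_le_ofReal (mul_klFun_sum_div_sum_le ha hb hinf hB)

theorem sum_iDivTerm_mul_div_sum (hb : ∀ l ∈ s, 0 ≤ b l) (hB : ∑ l ∈ s, b l ≠ 0) {p : ℝ}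
    (hp : 0 ≤ p) :
    ∑ l ∈ s, iDivTerm (p * b l / ∑ l' ∈ s, b l') (b l) = iDivTerm p (∑ l ∈ s, b l) := by
  set B := ∑ l ∈ s, b l
  have hterm : ∀ l ∈ s, iDivTerm (p * b l / B) (b l) = ENNReal.ofReal (b l * klFun (p / B)) := by
    intro l hl
    by_cases hbl : b l = 0
    · simp [hbl, iDivTerm]
    · rw [iDivTerm_eq_ofReal_mul_klFun fun _ => hbl]
      congr 3
      field_simp
  rw [sum_congr rfl hterm, ← ENNReal.ofReal_sum_of_nonneg fun l hl =>
      mul_nonneg (hb l hl) (klFun_nonneg (div_nonneg hp (sum_nonneg hb))),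
    ← sum_mul, iDivTerm_eq_ofReal_mul_klFun fun _ => hB]

end LogSum

section Divergence

variable {m k n : ℕ}

theorem memQ.nonneg {S : Fin m → Fin k → Fin n → ℝ} (hS : memQ S) : ∀ i l j, 0 ≤ S i l j := by
  obtain ⟨Qm, Qp, hQm, hQp, -, hfac⟩ := hS
  intro i l j
  rw [hfac]
  exact mul_nonneg (hQm i l) (hQp l j)

theorem DM_sum_le_DT {P : Matrix (Fin m) (Fin n) ℝ} {T S : Fin m → Fin k → Fin n → ℝ}
    (hT : memP P T) (hS : ∀ i l j, 0 ≤ S i l j) :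
    DM P (fun i j => ∑ l, S i l j) ≤ DT T S := by
  unfold DM DT
  refine sum_le_sum fun i _ => ?_
  rw [sum_comm]
  refine sum_le_sum fun j _ => ?_
  rw [← hT.2 i j]
  exact iDivTerm_sum_le_sum (fun l _ => hT.1 i l j) (fun l _ => hS i l j)

theorem exists_memP_DT_eq_DM {P : Matrix (Fin m) (Fin n) ℝ} {S : Fin m → Fin k → Fin n → ℝ}
    (hP : ∀ i j, 0 ≤ P i j) (hS : ∀ i l j, 0 ≤ S i l j) (hS' : ∀ i j, ∑ l, S i l j ≠ 0) :
    ∃ T, memP P T ∧ DT T S = DM P (fun i j => ∑ l, S i l j) := by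
  refine ⟨fun i l j => P i j * S i l j / ∑ l', S i l' j, ⟨fun i l j => ?_, fun i j => ?_⟩, ?_⟩
  · exact div_nonneg (mul_nonneg (hP i j) (hS i l j)) (sum_nonneg fun l _ => hS i l j)
  · rw [← sum_div, ← mul_sum, mul_div_cancel_right₀ _ (hS' i j)]
  · unfold DM DT
    refine sum_congr rfl fun i _ => ?_
    rw [sum_comm]
    exact sum_congr rfl fun j _ =>
      sum_iDivTerm_mul_div_sum (fun l _ => hS i l j) (hS' i j) (hP i j)

theorem DM_eq_top_of_apply {A B : Matrix (Fin m) (Fin n) ℝ} {i : Fin m} {j : Fin n}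
    (hA : A i j ≠ 0) (hB : B i j = 0) : DM A B = ⊤ :=
  ENNReal.sum_eq_top.2 ⟨i, mem_univ _,
    ENNReal.sum_eq_top.2 ⟨j, mem_univ _, by simp [iDivTerm, hA, hB]⟩⟩

end Divergence

theorem lifted_min_eq {m n k : ℕ} (P : Matrix (Fin m) (Fin n) ℝ)
    (hP : ∀ i j, 0 < P i j) :
    sInf {d : ℝ≥0∞ | ∃ S : Fin m → Fin k → Fin n → ℝ, memQ S ∧
        d = DM P (fun i j => ∑ l, S i l j)} =
    sInf {d : ℝ≥0∞ | ∃ (T S : Fin m → Fin k → Fin n → ℝ),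
        memP P T ∧ memQ S ∧ d = DT T S} := by
  apply le_antisymm
  · refine le_sInf ?_
    rintro _ ⟨T, S, hT, hS, rfl⟩
    exact sInf_le_of_le ⟨S, hS, rfl⟩ (DM_sum_le_DT hT hS.nonneg)
  · refine le_sInf ?_
    rintro _ ⟨S, hS, rfl⟩
    by_cases hpos : ∀ i j, ∑ l, S i l j ≠ 0
    · obtain ⟨T, hT, hTS⟩ := exists_memP_DT_eq_DM (fun i j => (hP i j).le) hS.nonneg hpos
      exact sInf_le ⟨T, S, hT, hS, hTS.symm⟩
    · push Not at hpos
      obtain ⟨i, j, hij⟩ := hpos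
      rw [DM_eq_top_of_apply (B := fun i j => ∑ l, S i l j) (hP i j).ne' hij]
      exact le_top
end
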